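/- arXiv:2202.02504 — 3 statements merged into one kernel-verified Lean document; each statement's English description precedes it below -/
import Mathlib

section
/- The third term of the Drude distribution, (Γ/π)·(ω² + Ω₀²)/((ω² − Ω₀²)² + Γ²ω²), integrates to 1 over [0, ∞) for any Γ > 0 and Ω₀ > 0. -/
/-!
The substitution `u = ω - Ω₀² / ω` maps `(0, ∞)` bijectively onto `ℝ` with
`du = (1 + Ω₀² / ω²) dω`, and `(ω² - Ω₀²)² + Γ² ω² = ω² (u² + Γ²)`. Hence the integrand is the
Jacobian times the Cauchy density `(Γ / π) / (u² + Γ²)`, whose total mass is `1`.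
-/

open MeasureTheory Real Set ProbabilityTheory

section SubDiv

variable {c : ℝ}

lemma strictMonoOn_sub_div_Ioi (hc : 0 ≤ c) : StrictMonoOn (fun x : ℝ => x - c / x) (Ioi 0) := by
  intro a ha b _ hab
  have : c / b ≤ c / a := div_le_div_of_nonneg_left hc ha hab.le
  dsimp only
  linarith

lemma image_sub_div_Ioi (hc : 0 < c) : (fun x : ℝ => x - c / x) '' Ioi 0 = univ := by
  refine eq_univ_of_forall fun u => ?_
  set s := √(u ^ 2 + 4 * c)
  have hs_sq : s ^ 2 = u ^ 2 + 4 * c := sq_sqrt (by positivity)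
  have hs_nonneg : 0 ≤ s := sqrt_nonneg _
  -- `(u + s) / 2` is the positive root of `x² - u x - c`
  have hpos : 0 < u + s := by nlinarith
  refine ⟨(u + s) / 2, by simpa using hpos, ?_⟩
  field_simp
  linear_combination hs_sq

lemma hasDerivAt_sub_div {x : ℝ} (hx : x ≠ 0) :
    HasDerivAt (fun x : ℝ => x - c / x) (1 + c / x ^ 2) x := by
  have h := (hasDerivAt_id' x).fun_sub ((hasDerivAt_inv hx).const_mul c)
  simpa only [← div_eq_mul_inv, mul_neg, sub_neg_eq_add] using h

theorem integral_comp_sub_div_Ioi {E : Type*} [NormedAddCommGroup E] [NormedSpace ℝ E]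
    (hc : 0 < c) (g : ℝ → E) :
    ∫ x in Ioi 0, (1 + c / x ^ 2) • g (x - c / x) = ∫ u, g u := by
  have key := integral_image_eq_integral_abs_deriv_smul measurableSet_Ioi
    (fun x hx => (hasDerivAt_sub_div (c := c) (ne_of_gt hx)).hasDerivWithinAt)
    (strictMonoOn_sub_div_Ioi hc.le).injOn g
  rw [image_sub_div_Ioi hc, Measure.restrict_univ] at key
  rw [key]
  refine setIntegral_congr_fun measurableSet_Ioi fun x _ => ?_
  rw [abs_of_pos (by positivity)]

end SubDiv

lemma integral_cauchy_density {Γ : ℝ} (hΓ : 0 < Γ) : ∫ u, Γ / π / (u ^ 2 + Γ ^ 2) = 1 := by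
  have hγ : Γ.toNNReal ≠ 0 := by simpa using hΓ
  rw [← integral_cauchyPDFReal_eq_one 0 hγ]
  congr 1 with u
  rw [cauchyPDFReal_def, Real.coe_toNNReal Γ hΓ.le, sub_zero]
  field_simp

theorem drude_third_term_normalized
    (Γ Ω₀ : ℝ) (hΓ : 0 < Γ) (hΩ₀ : 0 < Ω₀) :
    (∫ ω in Set.Ioi (0:ℝ),
      (Γ/π) * (ω^2 + Ω₀^2) / ((ω^2 - Ω₀^2)^2 + Γ^2 * ω^2)) = 1 := by
  have hintegrand : ∀ ω ∈ Ioi (0 : ℝ),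
      (Γ/π) * (ω^2 + Ω₀^2) / ((ω^2 - Ω₀^2)^2 + Γ^2 * ω^2)
        = (1 + Ω₀ ^ 2 / ω ^ 2) • (Γ / π / ((ω - Ω₀ ^ 2 / ω) ^ 2 + Γ ^ 2)) := by
    intro ω hω
    have hω0 : ω ≠ 0 := ne_of_gt hω
    have : (ω - Ω₀ ^ 2 / ω) ^ 2 + Γ ^ 2 ≠ 0 := by positivity
    have : (ω ^ 2 - Ω₀ ^ 2) ^ 2 + Γ ^ 2 * ω ^ 2 ≠ 0 := by positivity
    rw [smul_eq_mul]
    field_simp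
  rw [setIntegral_congr_fun measurableSet_Ioi hintegrand,
    integral_comp_sub_div_Ioi (by positivity) fun u => Γ / π / (u ^ 2 + Γ ^ 2),
    integral_cauchy_density hΓ]
end

section
/- The large-cutoff radiation-bath identity: for Γ, Ω₀ > 0, the function Γ(ω² + Ω₀²)/((ω² − Ω₀²)² + Γ²ω²) − Γ/Ω₀² tends to −Γ/Ω₀² as ω → ∞, and its first term, divided by π, is a probability density on [0, ∞): it is positive and its integral equals 1. -/
/-!
Up to the factor `1 / π`, the density is the derivative on `(0, ∞)` of
`arctan ((ω² - Ω₀²) / (Γ ω))`, whose argument runs from `-∞` to `+∞` as `ω` goes from `0⁺` to `∞`;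
so its integral is `π / 2 - (-π / 2) = π`. The density decays like `Γ / ω²`, hence tends to `0`.
-/

open MeasureTheory Real Filter Set Topology

theorem integral_Ioi_of_hasDerivAt_of_nonneg_of_tendsto_nhdsGT {g g' : ℝ → ℝ} {a l₀ l : ℝ}
    (hderiv : ∀ x ∈ Ioi a, HasDerivAt g (g' x) x) (g'pos : ∀ x ∈ Ioi a, 0 ≤ g' x)
    (ha : Tendsto g (𝓝[>] a) (𝓝 l₀)) (hg : Tendsto g atTop (𝓝 l)) :
    ∫ x in Ioi a, g' x = l - l₀ := by
  -- `g` need not be defined sensibly at `a`; redefine it there as its right limit.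
  set G := Function.update g a l₀
  have hGderiv : ∀ x ∈ Ioi a, HasDerivAt G (g' x) x := fun x hx =>
    (hderiv x hx).congr_of_eventuallyEq <| by
      filter_upwards [eventually_ne_nhds (ne_of_gt hx)] with y hy
      exact Function.update_of_ne hy _ _
  have hGcont : ContinuousWithinAt G (Ici a) a := by
    rwa [continuousWithinAt_update_same, Ici_sdiff_left]
  have hGtop : Tendsto G atTop (𝓝 l) := hg.congr' <| by
    filter_upwards [eventually_ne_atTop a] with x hx
    exact (Function.update_of_ne hx _ _).symm
  simpa [G] using integral_Ioi_of_hasDerivAt_of_nonneg hGcont hGderiv g'pos hGtop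

noncomputable def radiationDensity (Γ Ω₀ ω : ℝ) : ℝ :=
  Γ * (ω ^ 2 + Ω₀ ^ 2) / ((ω ^ 2 - Ω₀ ^ 2) ^ 2 + Γ ^ 2 * ω ^ 2)

noncomputable def radiationPhase (Γ Ω₀ ω : ℝ) : ℝ :=
  arctan ((ω ^ 2 - Ω₀ ^ 2) / (Γ * ω))

section

variable {Γ Ω₀ : ℝ}

theorem radiationDensity_denom_pos (hΓ : Γ ≠ 0) (hΩ₀ : Ω₀ ≠ 0) (ω : ℝ) :
    0 < (ω ^ 2 - Ω₀ ^ 2) ^ 2 + Γ ^ 2 * ω ^ 2 := by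
  rcases eq_or_ne ω 0 with rfl | hω
  · simpa using pow_pos (sq_pos_of_ne_zero hΩ₀) 2
  · positivity

theorem radiationDensity_pos (hΓ : 0 < Γ) (hΩ₀ : Ω₀ ≠ 0) (ω : ℝ) :
    0 < radiationDensity Γ Ω₀ ω :=
  div_pos (by positivity) (radiationDensity_denom_pos hΓ.ne' hΩ₀ ω)

theorem hasDerivAt_radiationPhase (hΓ : Γ ≠ 0) {x : ℝ} (hx : x ≠ 0) :
    HasDerivAt (radiationPhase Γ Ω₀) (radiationDensity Γ Ω₀ x) x := by
  have hΓx : Γ * x ≠ 0 := mul_ne_zero hΓ hx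
  have hquot : HasDerivAt (fun x : ℝ => (x ^ 2 - Ω₀ ^ 2) / (Γ * x))
      ((2 * x * (Γ * x) - (x ^ 2 - Ω₀ ^ 2) * Γ) / (Γ * x) ^ 2) x :=
    (((hasDerivAt_pow 2 x).sub_const _).congr_deriv (by ring)).div
      ((hasDerivAt_id x).const_mul Γ |>.congr_deriv (mul_one Γ)) hΓx
  refine ((hasDerivAt_arctan _).comp x hquot).congr_deriv ?_
  have hden : (x ^ 2 - Ω₀ ^ 2) ^ 2 + Γ ^ 2 * x ^ 2 ≠ 0 := by positivity
  rw [radiationDensity]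
  field_simp
  ring

theorem tendsto_radiationPhase_atTop (hΓ : 0 < Γ) :
    Tendsto (radiationPhase Γ Ω₀) atTop (𝓝 (π / 2)) := by
  have hquot : Tendsto (fun x : ℝ => (x ^ 2 - Ω₀ ^ 2) / (Γ * x)) atTop atTop := by
    refine ((tendsto_id.atTop_div_const hΓ).atTop_add
      ((tendsto_const_nhds (x := Ω₀ ^ 2)).div_atTop (tendsto_id.const_mul_atTop hΓ)).neg).congr' ?_
    filter_upwards [eventually_gt_atTop 0] with x hx
    simp only [id]
    field_simp
    ring
  exact (tendsto_arctan_atTop.mono_right nhdsWithin_le_nhds).comp hquot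

theorem tendsto_radiationPhase_nhdsGT_zero (hΓ : 0 < Γ) (hΩ₀ : Ω₀ ≠ 0) :
    Tendsto (radiationPhase Γ Ω₀) (𝓝[>] 0) (𝓝 (-(π / 2))) := by
  have hnum : Tendsto (fun x : ℝ => x ^ 2 - Ω₀ ^ 2) (𝓝[>] 0) (𝓝 (-Ω₀ ^ 2)) := by
    simpa using (((continuous_pow 2).tendsto (0 : ℝ)).sub_const (Ω₀ ^ 2)).mono_left
      nhdsWithin_le_nhds
  have hden : Tendsto (fun x : ℝ => Γ * x) (𝓝[>] 0) (𝓝[>] 0) := by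
    refine tendsto_nhdsWithin_of_tendsto_nhds_of_eventually_within _ ?_ ?_
    · exact ((continuous_const_mul Γ).tendsto' 0 0 (mul_zero Γ)).mono_left nhdsWithin_le_nhds
    · filter_upwards [self_mem_nhdsWithin] with x (hx : 0 < x) using mul_pos hΓ hx
  have hquot : Tendsto (fun x : ℝ => (x ^ 2 - Ω₀ ^ 2) / (Γ * x)) (𝓝[>] 0) atBot := by
    simpa only [div_eq_mul_inv, Pi.inv_apply] using
      hnum.neg_mul_atTop (neg_neg_of_pos (by positivity))
        hden.inv_tendsto_nhdsGT_zero
  exact (tendsto_arctan_atBot.mono_right nhdsWithin_le_nhds).comp hquot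

theorem integral_radiationDensity (hΓ : 0 < Γ) (hΩ₀ : Ω₀ ≠ 0) :
    ∫ ω in Ioi 0, radiationDensity Γ Ω₀ ω = π := by
  rw [integral_Ioi_of_hasDerivAt_of_nonneg_of_tendsto_nhdsGT
    (fun x hx => hasDerivAt_radiationPhase hΓ.ne' (ne_of_gt hx))
    (fun x _ => (radiationDensity_pos hΓ hΩ₀ x).le)
    (tendsto_radiationPhase_nhdsGT_zero hΓ hΩ₀) (tendsto_radiationPhase_atTop hΓ)]
  ring

theorem tendsto_radiationDensity_atTop (Γ Ω₀ : ℝ) :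
    Tendsto (radiationDensity Γ Ω₀) atTop (𝓝 0) := by
  -- In the variable `t = ω⁻²` the density is a rational function of `t` vanishing at `t = 0`.
  set φ : ℝ → ℝ := fun t => Γ * t * (1 + Ω₀ ^ 2 * t) / ((1 - Ω₀ ^ 2 * t) ^ 2 + Γ ^ 2 * t)
  have hφ : ContinuousAt φ 0 := ContinuousAt.div (by fun_prop) (by fun_prop) (by simp)
  have ht : Tendsto (fun ω : ℝ => (ω ^ 2)⁻¹) atTop (𝓝 0) :=
    tendsto_inv_atTop_zero.comp (tendsto_pow_atTop two_ne_zero)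
  have hlim : Tendsto (φ ∘ fun ω : ℝ => (ω ^ 2)⁻¹) atTop (𝓝 0) := by
    simpa [φ] using hφ.tendsto.comp ht
  refine hlim.congr' ?_
  filter_upwards [eventually_ne_atTop 0] with ω hω
  simp only [φ, Function.comp, radiationDensity]
  rw [← mul_div_mul_right _ _ (pow_ne_zero 4 hω)]
  congr 1 <;> field_simp

end

theorem radiation_large_cutoff
    (Γ Ω₀ : ℝ) (hΓ : 0 < Γ) (hΩ₀ : 0 < Ω₀) :
    (∀ ω : ℝ, 0 ≤ ω →
      0 < (1/π) * (Γ * (ω^2 + Ω₀^2) / ((ω^2 - Ω₀^2)^2 + Γ^2 * ω^2))) ∧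
    (∫ ω in Set.Ioi (0:ℝ),
      (1/π) * (Γ * (ω^2 + Ω₀^2) / ((ω^2 - Ω₀^2)^2 + Γ^2 * ω^2))) = 1 ∧
    Tendsto (fun ω : ℝ =>
        Γ * (ω^2 + Ω₀^2) / ((ω^2 - Ω₀^2)^2 + Γ^2 * ω^2) - Γ / Ω₀^2)
      atTop (nhds (-(Γ / Ω₀^2))) := by
  refine ⟨fun ω _ => mul_pos (by positivity) (radiationDensity_pos hΓ hΩ₀.ne' ω), ?_, ?_⟩
  · change ∫ ω in Ioi 0, 1 / π * radiationDensity Γ Ω₀ ω = 1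
    rw [integral_const_mul, integral_radiationDensity hΓ hΩ₀.ne', one_div_mul_cancel pi_ne_zero]
  · have := (tendsto_radiationDensity_atTop Γ Ω₀).sub_const (Γ / Ω₀ ^ 2)
    rwa [zero_sub] at this
end

section
/- The Ohmic distribution P(ω) = (γ₀/π)(ω² + ω₀²)/((ω² − ω₀²)² + γ₀²ω²) attains its maximum on [0, ∞) at a unique point ω_m, and if γ₀ < √2·ω₀ then ω_m > 0 (the density has an interior most probable frequency). -/
/-! With `u = ω² + ω₀²` and `k = ω₀² (4ω₀² - γ₀²)` one has
`((ω² - ω₀²)² + γ₀² ω²) / u = u + k / u - (4ω₀² - γ₀²)`, so maximizing `P` over `ω ≥ 0` amounts to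
minimizing `u ↦ u + k / u` over `u ≥ ω₀²`. That minimum is attained exactly at `max ω₀² √k`,
which exceeds `ω₀²` as soon as `k > ω₀⁴`, i.e. `γ₀² < 3ω₀²`. -/

open Real Set

lemma strictMonoOn_add_div_Ici {k v : ℝ} (hv : 0 < v) (hk : k ≤ v ^ 2) :
    StrictMonoOn (fun u => u + k / u) (Ici v) := by
  intro u hu w hw huw
  have hu0 : 0 < u := hv.trans_le hu
  have hw0 : 0 < w := hu0.trans huw
  have hkuw : k < u * w := by nlinarith [mem_Ici.mp hu]
  have hdiff : w + k / w - (u + k / u) = (w - u) * (u * w - k) / (u * w) := by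
    field_simp; ring
  have : 0 < (w - u) * (u * w - k) / (u * w) :=
    div_pos (mul_pos (sub_pos.2 huw) (sub_pos.2 hkuw)) (mul_pos hu0 hw0)
  show u + k / u < w + k / w
  linarith

lemma add_div_lt_add_div_of_lt_sqrt {k u : ℝ} (hu : 0 < u) (hlt : u < √k) :
    √k + k / √k < u + k / u := by
  have hk : 0 < k := sqrt_pos.1 (hu.trans hlt)
  have hs := sq_sqrt hk.le
  set s := √k
  rw [← hs]
  have hdiff : u + s ^ 2 / u - (s + s ^ 2 / s) = (s - u) ^ 2 / u := by
    field_simp; ring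
  have : 0 < (s - u) ^ 2 / u := div_pos (pow_pos (sub_pos.2 hlt) 2) hu
  linarith

lemma max_sqrt_add_div_lt_add_div {a k u : ℝ} (ha : 0 < a) (hu : a ≤ u) (hne : u ≠ max a √k) :
    max a √k + k / max a √k < u + k / u := by
  rcases hne.lt_or_gt with hlt | hgt
  · have hlt' : u < √k := (lt_max_iff.1 hlt).resolve_left hu.not_gt
    rw [max_eq_right (hu.trans hlt'.le)]
    exact add_div_lt_add_div_of_lt_sqrt (ha.trans_le hu) hlt'
  · have hm : 0 < max a √k := ha.trans_le (le_max_left _ _)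
    refine strictMonoOn_add_div_Ici hm ?_ self_mem_Ici hgt.le hgt
    calc k ≤ √k ^ 2 := sq_sqrt' (x := k) ▸ le_max_left k 0
      _ ≤ max a √k ^ 2 := pow_le_pow_left₀ (sqrt_nonneg k) (le_max_right a √k) 2

lemma sq_sub_add_mul_pos {a g x : ℝ} (ha : 0 < a) (hg : 0 < g) (hx : 0 ≤ x) :
    0 < (x - a) ^ 2 + g * x := by
  rcases hx.eq_or_lt with rfl | hx
  · simpa using pow_pos ha 2
  · positivity

lemma sq_sub_add_mul_div_add_eq (a g x : ℝ) (hx : x + a ≠ 0) :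
    ((x - a) ^ 2 + g * x) / (x + a) = (x + a) + a * (4 * a - g) / (x + a) - (4 * a - g) := by
  field_simp
  ring

theorem ohmic_distribution_unique_maximizer
    (γ₀ ω₀ : ℝ) (hγ : 0 < γ₀) (hω₀ : 0 < ω₀) :
    let P : ℝ → ℝ := fun ω =>
      (γ₀/π) * (ω^2 + ω₀^2) / ((ω^2 - ω₀^2)^2 + γ₀^2 * ω^2)
    ∃ ωm : ℝ, 0 ≤ ωm ∧ IsMaxOn P (Set.Ici 0) ωm ∧
      (∀ ω' : ℝ, 0 ≤ ω' → IsMaxOn P (Set.Ici 0) ω' → ω' = ωm) ∧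
      (γ₀^2 < 2 * ω₀^2 → 0 < ωm) := by
  intro P
  set a := ω₀ ^ 2
  set c := 4 * a - γ₀ ^ 2
  set u := max a √(a * c)
  have ha : 0 < a := by positivity
  have hau : a ≤ u := le_max_left _ _
  set ωm := √(u - a)
  have hωm : ωm ^ 2 + a = u := by rw [sq_sqrt (sub_nonneg.2 hau)]; ring
  have hP : ∀ ω, P ω = γ₀ / π / ((ω ^ 2 + a) + a * c / (ω ^ 2 + a) - c) := fun ω => by
    rw [← sq_sub_add_mul_div_add_eq _ _ _ (by positivity), div_div_eq_mul_div]
  have hlt : ∀ ω, 0 ≤ ω → ω ≠ ωm → P ω < P ωm := by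
    intro ω hω hne
    have hu : ω ^ 2 + a ≠ u := fun h =>
      hne ((pow_left_inj₀ hω (sqrt_nonneg _) two_ne_zero).1 (by linarith))
    have hpos : 0 < u + a * c / u - c := by
      rw [← hωm, ← sq_sub_add_mul_div_add_eq _ _ _ (by positivity)]
      exact div_pos (sq_sub_add_mul_pos ha (by positivity) (sq_nonneg _)) (by positivity)
    rw [hP, hP, hωm]
    exact div_lt_div_of_pos_left (by positivity) hpos
      (by linarith [max_sqrt_add_div_lt_add_div ha (le_add_of_nonneg_left (sq_nonneg ω)) hu])
  refine ⟨ωm, sqrt_nonneg _, fun ω hω => ?_, fun ω hω hmax => ?_, fun h => ?_⟩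
  · rcases eq_or_ne ω ωm with rfl | hne
    exacts [le_refl (P ωm), (hlt ω hω hne).le]
  · by_contra hne
    exact (hmax (mem_Ici.2 (sqrt_nonneg _))).not_gt (hlt ω hω hne)
  · have hac : a < √(a * c) := (lt_sqrt ha.le).2 (by nlinarith)
    exact sqrt_pos.2 (sub_pos.2 (hac.trans_le (le_max_right _ _)))
end
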